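/- The Thue-Morse autocorrelation satisfies η(1) = -1/3. -/
import Mathlib

open Filter Finset

/-- Binary digit-sum of `n`. -/
def digitSum (n : ℕ) : ℕ := (Nat.digits 2 n).sum

/-- The Thue-Morse sign sequence `σ(n) = (-1)^{s(n)}`. -/
def tmSign (n : ℕ) : ℤ := (-1) ^ digitSum n

lemma digitSum_two_mul (n : ℕ) : digitSum (2 * n) = digitSum n := by
  rcases Nat.eq_zero_or_pos n with h | h
  · simp [h]
  · unfold digitSum
    rw [Nat.digits_def' (by norm_num : 1 < 2) (by omega)]
    simp

lemma digitSum_two_mul_add_one (n : ℕ) : digitSum (2 * n + 1) = digitSum n + 1 := by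
  unfold digitSum
  rw [Nat.digits_def' (by norm_num : 1 < 2) (by omega)]
  have h1 : (2 * n + 1) % 2 = 1 := by omega
  have h2 : (2 * n + 1) / 2 = n := by omega
  rw [h1, h2]
  simp [add_comm]

lemma tmSign_two_mul (n : ℕ) : tmSign (2 * n) = tmSign n := by
  simp [tmSign, digitSum_two_mul]

lemma tmSign_two_mul_add_one (n : ℕ) : tmSign (2 * n + 1) = -tmSign n := by
  simp [tmSign, digitSum_two_mul_add_one, pow_succ]

lemma tmSign_sq (n : ℕ) : tmSign n * tmSign n = 1 := by
  simp [tmSign, ← pow_add, ← two_mul, pow_mul]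

/-- The partial correlation sum. -/
def F (N : ℕ) : ℤ := ∑ i ∈ range N, tmSign i * tmSign (i + 1)

lemma F_succ (N : ℕ) : F (N + 1) = F N + tmSign N * tmSign (N + 1) :=
  Finset.sum_range_succ _ _

lemma a_even (i : ℕ) : tmSign (2 * i) * tmSign (2 * i + 1) = -1 := by
  rw [tmSign_two_mul, tmSign_two_mul_add_one, mul_neg, tmSign_sq]

lemma a_odd (i : ℕ) :
    tmSign (2 * i + 1) * tmSign (2 * i + 1 + 1) = -(tmSign i * tmSign (i + 1)) := by
  have : 2 * i + 1 + 1 = 2 * (i + 1) := by ring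
  rw [this, tmSign_two_mul, tmSign_two_mul_add_one, neg_mul]

lemma F_even (N : ℕ) : F (2 * N) = -N - F N := by
  induction N with
  | zero => simp [F]
  | succ n ih =>
      have h1 : 2 * (n + 1) = (2 * n + 1) + 1 := by ring
      rw [h1, F_succ, F_succ, a_even, a_odd, ih, F_succ]
      push_cast
      ring

lemma F_odd (N : ℕ) : F (2 * N + 1) = -N - F N - 1 := by
  rw [F_succ, F_even, a_even]
  ring

/-- The error term. -/
def G (N : ℕ) : ℤ := 3 * F N + N

lemma G_bound : ∀ k N : ℕ, N < 2 ^ k → |G N| ≤ 2 * k := by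
  intro k
  induction k with
  | zero =>
      intro N hN
      interval_cases N
      simp [G, F]
  | succ k ih =>
      intro N hN
      rcases Nat.even_or_odd N with ⟨m, hm⟩ | ⟨m, hm⟩
      · have hm2 : m < 2 ^ k := by
          rw [pow_succ] at hN; omega
        have hG : G N = -G m := by
          have h2 : N = 2 * m := by omega
          rw [h2]; unfold G; rw [F_even]; push_cast; ring
        rw [hG, abs_neg]
        have := ih m hm2
        push_cast
        omega
      · have hm2 : m < 2 ^ k := by
          rw [pow_succ] at hN; omega
        have hG : G N = -G m - 2 := by
          rw [hm]; unfold G; rw [F_odd]; push_cast; ring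
        rw [hG]
        have h1 := ih m hm2
        have h2 : |(-G m - 2 : ℤ)| ≤ |G m| + 2 := by
          calc |(-G m - 2 : ℤ)| ≤ |(-G m : ℤ)| + |(2 : ℤ)| := abs_sub _ _
          _ = |G m| + 2 := by rw [abs_neg]; norm_num
        push_cast
        omega

lemma G_log_bound (N : ℕ) : |G N| ≤ 2 * Nat.log 2 N + 2 := by
  have h := G_bound (Nat.log 2 N + 1) N (Nat.lt_pow_succ_log_self (by norm_num) N)
  push_cast at h ⊢
  omega

/-- The Thue-Morse autocorrelation satisfies `η(1) = -1/3`. -/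
theorem tm_autocorrelation_one :
    Tendsto
      (fun N : ℕ => (1 / (N : ℝ)) * ∑ i ∈ range N, (tmSign i : ℝ) * (tmSign (i + 1) : ℝ))
      atTop (nhds (-(1 / 3))) := by
  have key : ∀ N : ℕ, (∑ i ∈ range N, (tmSign i : ℝ) * (tmSign (i + 1) : ℝ)) = (F N : ℝ) := by
    intro N
    rw [F]
    push_cast
    rfl
  -- real-valued little-o facts
  have hlog : Tendsto (fun x : ℝ => Real.log x / x) atTop (nhds 0) :=
    Real.isLittleO_log_id_atTop.tendsto_div_nhds_zero
  have hlogb : Tendsto (fun x : ℝ => Real.logb 2 x / x) atTop (nhds 0) := by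
    have h := hlog.const_mul (Real.log 2)⁻¹
    rw [mul_zero] at h
    refine h.congr fun x => ?_
    rw [Real.logb]
    ring
  have htR : Tendsto (fun x : ℝ => (2 * Real.logb 2 x + 2) / (3 * x)) atTop (nhds 0) := by
    have h1 := hlogb.const_mul (2 / 3 : ℝ)
    have h2 := tendsto_inv_atTop_zero.const_mul (2 / 3 : ℝ)
    have h3 := h1.add h2
    simp only [mul_zero, add_zero] at h3
    refine h3.congr fun x => ?_
    rcases eq_or_ne x 0 with hx | hx
    · simp [hx]
    · field_simp
  have htN : Tendsto (fun N : ℕ => (2 * Real.logb 2 N + 2) / (3 * N)) atTop (nhds 0) :=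
    htR.comp tendsto_natCast_atTop_atTop
  have herr : Tendsto (fun N : ℕ => (G N : ℝ) / (3 * N)) atTop (nhds 0) := by
    refine squeeze_zero_norm' ?_ htN
    filter_upwards [eventually_ge_atTop 1] with N hN
    have hNpos : (0 : ℝ) < N := by exact_mod_cast hN
    rw [Real.norm_eq_abs, abs_div, abs_of_pos (by positivity : (0 : ℝ) < 3 * N)]
    have hb1 : |(G N : ℝ)| ≤ 2 * (Nat.log 2 N : ℝ) + 2 := by
      have := G_log_bound N
      have : |(G N : ℝ)| = ((|G N| : ℤ) : ℝ) := by push_cast; rfl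
      rw [this]
      exact_mod_cast G_log_bound N
    have hb2 : (Nat.log 2 N : ℝ) ≤ Real.logb 2 N := Real.natLog_le_logb N 2
    have hb3 : |(G N : ℝ)| ≤ 2 * Real.logb 2 N + 2 := by linarith
    gcongr
  have heq : (fun N : ℕ => (1 / (N : ℝ)) * ∑ i ∈ range N, (tmSign i : ℝ) * (tmSign (i + 1) : ℝ))
      =ᶠ[atTop] fun N : ℕ => -(1 / 3) + (G N : ℝ) / (3 * N) := by
    filter_upwards [eventually_ge_atTop 1] with N hN
    have hNpos : (0 : ℝ) < N := by exact_mod_cast hN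
    rw [key]
    have hG : (G N : ℝ) = 3 * (F N : ℝ) + N := by
      unfold G; push_cast; ring
    rw [hG]
    field_simp
    ring
  have hfinal : Tendsto (fun N : ℕ => -(1 / 3 : ℝ) + (G N : ℝ) / (3 * N)) atTop
      (nhds (-(1 / 3))) := by
    have := (tendsto_const_nhds (x := -(1 / 3 : ℝ)) (f := atTop)).add herr
    rwa [add_zero] at this
  exact hfinal.congr' heq.symm
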